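/- arXiv:2509.20275 — 2 statements merged into one kernel-verified Lean document; each statement's English description precedes it below -/
import Mathlib

section
/- Let A = k⟨⟨x,y⟩⟩ and define a linear map F from the span of elements P(ad_x, ad_y)(z) (inside the free associative algebra on x, y, z, where P ranges over k⟨⟨x,y⟩⟩) to A by collecting, from the expansion of P(ad_x,ad_y)(z), the words of the form (word in x,y)·z·(word in x,y) and recording their coefficients as prescribed by the bimodule map sending z ↦ 1 with left letters acting by left multiplication and right letters acting by right multiplication after applying the augmentation. Then F(P(ad_x, ad_y)(z)) = S(P)(x,y), where S is the antipode of the concatenation Hopf algebra (reversal of words with sign (−1)^{length}). In particular, F is injective on this span. -/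
open scoped BigOperators TensorProduct

noncomputable section

variable (k : Type*) [Field k] [CharZero k]

/-- Model of the noncommutative (power-series) algebra `A = k⟨⟨x₀,x₁⟩⟩`. -/
abbrev A := MonoidAlgebra k (FreeMonoid (Fin 2))

def x0 : A k := MonoidAlgebra.single (FreeMonoid.of 0) 1
def x1 : A k := MonoidAlgebra.single (FreeMonoid.of 1) 1
def gen (i : Fin 2) : A k := MonoidAlgebra.single (FreeMonoid.of i) 1
def word (l : List (Fin 2)) : A k := MonoidAlgebra.single (FreeMonoid.ofList l) 1

/-- the augmentation (constant term) -/
def eps (φ : A k) : k := φ.coeff 1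

/-- right Fox derivative `d^R_i` -/
def dR (i : Fin 2) (φ : A k) : A k :=
  MonoidAlgebra.ofCoeff (Finsupp.comapDomain (fun w => FreeMonoid.of i * w) φ.coeff
    (Function.Injective.injOn (mul_right_injective (FreeMonoid.of i))))

/-- left Fox derivative `d^L_i` -/
def dL (i : Fin 2) (φ : A k) : A k :=
  MonoidAlgebra.ofCoeff (Finsupp.comapDomain (fun w => w * FreeMonoid.of i) φ.coeff
    (Function.Injective.injOn (mul_left_injective (FreeMonoid.of i))))

/-- reduced coaction on a word -/
def muW : List (Fin 2) → A k
  | [] => 0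
  | [_] => 0
  | a :: b :: t =>
      (if a = b then word k (a :: t) else 0) + gen k a * muW (b :: t)

/-- the reduced coaction `μ` -/
def mu (φ : A k) : A k := Finsupp.sum φ.coeff fun w c => c • muW k (FreeMonoid.toList w)

/-- substitution `φ(u,v)` -/
def subst (u v : A k) : A k →ₐ[k] A k :=
  (MonoidAlgebra.lift k (A k) (FreeMonoid (Fin 2)))
    (FreeMonoid.lift (fun i : Fin 2 => if i = 0 then u else v))

/-- shuffle coproduct (the algebra map for concatenation with primitive generators) -/
def delta : A k →ₐ[k] TensorProduct k (A k) (A k) :=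
  (MonoidAlgebra.lift k (TensorProduct k (A k) (A k)) (FreeMonoid (Fin 2)))
    (FreeMonoid.lift (fun i : Fin 2 =>
      gen k i ⊗ₜ[k] (1 : A k) + (1 : A k) ⊗ₜ[k] gen k i))

/-- `ψ` is a Lie series: primitive for the shuffle coproduct -/
def IsPrim (ψ : A k) : Prop :=
  delta k ψ = ψ ⊗ₜ[k] (1 : A k) + (1 : A k) ⊗ₜ[k] ψ


/-- free associative algebra on `x = 0`, `y = 1`, `z = 2` -/
abbrev A3 := MonoidAlgebra k (FreeMonoid (Fin 3))

def g3 (i : Fin 3) : A3 k := MonoidAlgebra.single (FreeMonoid.of i) 1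

/-- `ad_{x_{i₁}} ∘ ⋯ ∘ ad_{x_{iₘ}}` applied to `z`, letters in `{x,y}` -/
def adW3 : List (Fin 2) → A3 k
  | [] => g3 k 2
  | i :: t => ⁅g3 k (Fin.castSucc i), adW3 t⁆

/-- `P ↦ P(ad_x, ad_y)(z)` -/
def adSubst (P : A k) : A3 k :=
  Finsupp.sum P.coeff fun w c => c • adW3 k (FreeMonoid.toList w)

def down : Fin 3 → Fin 2 := fun i => if i = 0 then 0 else 1

/-- the bimodule map `F` with `F(z) = 1`: on a word it keeps only words of the form
`z·v` with `v` a word in `x,y` (letters left of `z` act through the augmentation,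
letters right of `z` by right multiplication). -/
def Fword (w : List (Fin 3)) : A k :=
  if w.head? = some 2 ∧ (2 : Fin 3) ∉ w.tail then word k (w.tail.map down) else 0

def Fmap (γ : A3 k) : A k :=
  Finsupp.sum γ.coeff fun w c => c • Fword k (FreeMonoid.toList w)

/-- the antipode of the concatenation Hopf algebra: word reversal with sign
`(−1)^{length}` -/
def antipodeA (φ : A k) : A k :=
  Finsupp.sum φ.coeff fun w c =>
    ((-1 : k) ^ (FreeMonoid.toList w).length * c) • word k (FreeMonoid.toList w).reverse

/-! `F` kills every word beginning with `x` or `y` and multiplies on the right by the letters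
`x, y`, so `F(ad_a u) = F(a u - u a) = -F(u) a`. By induction on the word,
`F(ad_{a₁} ⋯ ad_{aₘ} z) = (-1)^m aₘ ⋯ a₁ = S(a₁ ⋯ aₘ)`, and the identity follows by linearity.
Injectivity holds because `S` is an involution. -/

section

variable {K : Type*} [Field K]

lemma word_append (l₁ l₂ : List (Fin 2)) : word K (l₁ ++ l₂) = word K l₁ * word K l₂ := by
  rw [word, word, word, MonoidAlgebra.single_mul_single, one_mul]
  rfl

lemma Fword_cons_of_ne {j : Fin 3} (hj : j ≠ 2) (w : List (Fin 3)) : Fword K (j :: w) = 0 :=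
  if_neg fun h => hj (Option.some_injective _ h.1)

lemma Fword_append_singleton {j : Fin 3} (hj : j ≠ 2) (w : List (Fin 3)) :
    Fword K (w ++ [j]) = Fword K w * gen K (down j) := by
  cases w with
  | nil => simp [Fword, hj]
  | cons a t =>
    simp only [Fword, List.cons_append, List.head?_cons, List.tail_cons, Option.some.injEq,
      List.mem_append, List.mem_singleton, Ne.symm hj, or_false]
    split_ifs
    · rw [List.map_append, word_append]
      rfl
    · rw [zero_mul]

def Fmapₗ : A3 K →ₗ[K] A K :=
  Finsupp.linearCombination K (fun w : FreeMonoid (Fin 3) => Fword K w.toList) ∘ₗ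
    (MonoidAlgebra.coeffLinearEquiv K).toLinearMap

lemma coe_Fmapₗ : ⇑(Fmapₗ : A3 K →ₗ[K] A K) = Fmap K := rfl

lemma Fmap_single (w : FreeMonoid (Fin 3)) (c : K) :
    Fmap K (MonoidAlgebra.single w c) = c • Fword K w.toList :=
  Finsupp.sum_single_index (zero_smul _ _)

lemma Fmap_g3_mul {j : Fin 3} (hj : j ≠ 2) (γ : A3 K) : Fmap K (g3 K j * γ) = 0 := by
  rw [← coe_Fmapₗ]
  induction γ using MonoidAlgebra.induction_linear with
  | zero => rw [mul_zero, map_zero]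
  | add f g hf hg => rw [mul_add, map_add, hf, hg, add_zero]
  | single w c =>
    rw [g3, MonoidAlgebra.single_mul_single, one_mul, coe_Fmapₗ, Fmap_single,
      FreeMonoid.toList_mul, FreeMonoid.toList_of, List.singleton_append,
      Fword_cons_of_ne hj, smul_zero]

lemma Fmap_mul_g3 {j : Fin 3} (hj : j ≠ 2) (γ : A3 K) :
    Fmap K (γ * g3 K j) = Fmap K γ * gen K (down j) := by
  rw [← coe_Fmapₗ]
  induction γ using MonoidAlgebra.induction_linear with
  | zero => rw [zero_mul, map_zero, zero_mul]
  | add f g hf hg => rw [add_mul, map_add, hf, hg, map_add, add_mul]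
  | single w c =>
    rw [g3, MonoidAlgebra.single_mul_single, mul_one, coe_Fmapₗ, Fmap_single, Fmap_single,
      FreeMonoid.toList_mul, FreeMonoid.toList_of, Fword_append_singleton hj, smul_mul_assoc]

lemma castSucc_ne_two (i : Fin 2) : Fin.castSucc i ≠ 2 := by
  fin_cases i <;> decide

lemma down_castSucc (i : Fin 2) : down (Fin.castSucc i) = i := by
  fin_cases i <;> rfl

lemma Fmap_adW3 (l : List (Fin 2)) :
    Fmap K (adW3 K l) = (-1 : K) ^ l.length • word K l.reverse := by
  induction l with
  | nil => simp [adW3, g3, Fmap_single, Fword, word]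
  | cons i t ih =>
    rw [adW3, Ring.lie_def, ← coe_Fmapₗ, map_sub, coe_Fmapₗ,
      Fmap_g3_mul (castSucc_ne_two i), Fmap_mul_g3 (castSucc_ne_two i), ih, down_castSucc,
      List.length_cons, List.reverse_cons, word_append, pow_succ, mul_smul, neg_one_smul,
      smul_mul_assoc, zero_sub, smul_neg]
    rfl

def antipodeAₗ : A K →ₗ[K] A K :=
  Finsupp.linearCombination K
      (fun w : FreeMonoid (Fin 2) => (-1 : K) ^ w.toList.length • word K w.toList.reverse) ∘ₗ
    (MonoidAlgebra.coeffLinearEquiv K).toLinearMap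

lemma coe_antipodeAₗ : ⇑(antipodeAₗ : A K →ₗ[K] A K) = antipodeA K :=
  funext fun _ => Finsupp.sum_congr fun _ _ => (smul_smul _ _ _).trans (by rw [mul_comm]; rfl)

lemma antipodeA_single (w : FreeMonoid (Fin 2)) (c : K) :
    antipodeA K (MonoidAlgebra.single w c) =
      MonoidAlgebra.single (FreeMonoid.ofList w.toList.reverse) ((-1) ^ w.toList.length * c) :=
  (Finsupp.sum_single_index (by rw [mul_zero, zero_smul])).trans <| by
    rw [word, MonoidAlgebra.smul_single, smul_eq_mul, mul_one]

lemma antipodeA_antipodeA (φ : A K) : antipodeA K (antipodeA K φ) = φ := by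
  rw [← coe_antipodeAₗ]
  induction φ using MonoidAlgebra.induction_linear with
  | zero => rw [map_zero, map_zero]
  | add f g hf hg => rw [map_add, map_add, hf, hg]
  | single w c =>
    rw [coe_antipodeAₗ, antipodeA_single, antipodeA_single, FreeMonoid.toList_ofList,
      List.reverse_reverse, List.length_reverse, ← mul_assoc, ← pow_add,
      Even.neg_one_pow ⟨_, rfl⟩, one_mul]
    rfl

lemma antipodeA_injective : Function.Injective (antipodeA K) :=
  Function.LeftInverse.injective antipodeA_antipodeA

lemma Fmap_adSubst (P : A K) : Fmap K (adSubst K P) = antipodeA K P := by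
  rw [← coe_Fmapₗ, ← coe_antipodeAₗ, adSubst, Finsupp.sum, map_sum]
  exact Finset.sum_congr rfl fun w _ => by rw [map_smul, coe_Fmapₗ, Fmap_adW3]; rfl

end

/-- `F(P(ad_x,ad_y)(z)) = S(P)(x,y)`; in particular `F` is injective
on the span of the elements `P(ad_x,ad_y)(z)`. -/
theorem F_of_adSubst_eq_antipode :
    (∀ P : A k, Fmap k (adSubst k P) = antipodeA k P) ∧
    Set.InjOn (Fmap k) (Set.range (adSubst k)) := by
  refine ⟨Fmap_adSubst, ?_⟩
  rintro _ ⟨P, rfl⟩ _ ⟨Q, rfl⟩ h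
  rw [Fmap_adSubst, Fmap_adSubst] at h
  rw [antipodeA_injective h]
end
end

section
/- Let ψ ∈ A and suppose ψ satisfies the two reduced-coaction identities: (1) μ(ψ(−x₀−x₁, x₁)) = (d^R₁ψ(−x₀−x₁,x₁))(x₀+x₁, 0) − d^R₁(ψ(−x₀−x₁,x₁)) − (d^R₁ψ(−x₀−x₁,x₁))(x₁, 0), and (2) the identity obtained from (1) by exchanging x₀ and x₁: μ(ψ(−x₀−x₁, x₀)) = (d^R₁ψ(−x₀−x₁,x₁))(x₀+x₁, 0) − d^R₀(ψ(−x₀−x₁,x₀)) − (d^R₁ψ(−x₀−x₁,x₁))(x₀, 0). Set f(x) := x·(d^R₁ψ(−x₀−x₁,x₁))(x, 0) ∈ k[[x]]. Then the potential h_ψ := x₀·ψ(−x₀−x₁,x₀) + x₁·ψ(−x₀−x₁,x₁) satisfies the noncommutative krv2 equation μ(h_ψ) = f(x₀+x₁) − f(x₀) − f(x₁). -/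
open scoped BigOperators TensorProduct

noncomputable section

variable (k : Type*) [Field k] [CharZero k]

/-- `ψ(−x₀−x₁, x₁)` -/
def psiInf1 (ψ : A k) : A k := (subst k (-(x0 k + x1 k)) (x1 k)) ψ

/-- `ψ(−x₀−x₁, x₀)` -/
def psiInf0 (ψ : A k) : A k := (subst k (-(x0 k + x1 k)) (x0 k)) ψ

/-- `q = d^R₁(ψ(−x₀−x₁,x₁))` -/
def qOf (ψ : A k) : A k := dR k 1 (psiInf1 k ψ)

/-!
The reduced coaction satisfies the product rule `μ(xᵢ a) = xᵢ d^R_i(a) + xᵢ μ(a)`, which on a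
word is just the recursion defining `muW`. Applied to `h_ψ`, it makes `μ(h_ψ)` equal to
`x₀ d^R₀ ψ(−x₀−x₁,x₀) + x₁ d^R₁ ψ(−x₀−x₁,x₁)` plus `x₀` and `x₁` times the left-hand sides of
the two hypotheses; substituting them, the Fox-derivative terms cancel.
-/

section FoxCalculus

variable {K : Type*} [Field K]

lemma mu_zero : mu K 0 = 0 := by
  simp [mu]

lemma mu_add (φ φ' : A K) : mu K (φ + φ') = mu K φ + mu K φ' :=
  Finsupp.sum_add_index' (fun _ => zero_smul K _) (fun _ _ _ => add_smul _ _ _)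

lemma mu_smul (c : K) (φ : A K) : mu K (c • φ) = c • mu K φ := by
  rw [mu, MonoidAlgebra.coeff_smul,
    Finsupp.sum_smul_index' (h := fun w c => c • muW K (FreeMonoid.toList w))
      (fun _ => zero_smul K _),
    mu, Finsupp.smul_sum]
  simp only [smul_smul, smul_eq_mul]

lemma mu_word (l : List (Fin 2)) : mu K (word K l) = muW K l := by
  rw [word, mu, MonoidAlgebra.coeff_single,
    Finsupp.sum_single_index (h := fun w c => c • muW K (FreeMonoid.toList w)) (zero_smul K _),
    one_smul, FreeMonoid.toList_ofList]

lemma dR_zero (i : Fin 2) : dR K i 0 = 0 := by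
  ext
  simp [dR]

lemma dR_add (i : Fin 2) (φ φ' : A K) : dR K i (φ + φ') = dR K i φ + dR K i φ' :=
  congrArg MonoidAlgebra.ofCoeff
    (Finsupp.comapDomain_add_of_injective (mul_right_injective (FreeMonoid.of i))
      φ.coeff φ'.coeff)

lemma dR_smul (i : Fin 2) (c : K) (φ : A K) : dR K i (c • φ) = c • dR K i φ :=
  congrArg MonoidAlgebra.ofCoeff
    (Finsupp.comapDomain_smul_of_injective (mul_right_injective (FreeMonoid.of i)) c φ.coeff)

lemma gen_mul_word (i : Fin 2) (l : List (Fin 2)) : gen K i * word K l = word K (i :: l) := by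
  rw [gen, word, MonoidAlgebra.single_mul_single, one_mul]
  rfl

lemma dR_word_nil (i : Fin 2) : dR K i (word K []) = 0 := by
  ext w
  simp [dR, word]

lemma dR_word_cons (i a : Fin 2) (t : List (Fin 2)) :
    dR K i (word K (a :: t)) = if i = a then word K t else 0 := by
  ext w
  split_ifs with h
  · subst h
    simp [dR, word]
  · refine Finsupp.single_eq_of_ne fun hw => h ?_
    simpa using congrArg List.head? (congrArg FreeMonoid.toList hw)

lemma mu_gen_mul_word (i : Fin 2) (l : List (Fin 2)) :
    mu K (gen K i * word K l) = gen K i * dR K i (word K l) + gen K i * mu K (word K l) := by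
  rw [gen_mul_word, mu_word, mu_word]
  cases l with
  | nil => simp [dR_word_nil, muW]
  | cons a t =>
    rw [dR_word_cons, muW]
    congr 1
    split_ifs with h
    · rw [h, gen_mul_word]
    · rw [mul_zero]

theorem mu_gen_mul (i : Fin 2) (φ : A K) :
    mu K (gen K i * φ) = gen K i * dR K i φ + gen K i * mu K φ := by
  induction φ using MonoidAlgebra.induction_linear with
  | zero => simp only [mul_zero, mu_zero, dR_zero, add_zero]
  | add φ φ' hφ hφ' =>
    rw [mul_add, mu_add, hφ, hφ', dR_add, mu_add]
    noncomm_ring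
  | single w c =>
    have hw : MonoidAlgebra.single w c = c • word K w.toList := by
      rw [word, MonoidAlgebra.smul_single, smul_eq_mul, mul_one, FreeMonoid.ofList_toList]
    rw [hw, mul_smul_comm, mu_smul, mu_gen_mul_word, dR_smul, mu_smul, mul_smul_comm,
      mul_smul_comm, smul_add]

end FoxCalculus

/-- given the two reduced-coaction identities, the potential
`h_ψ = x₀ψ(−x₀−x₁,x₀) + x₁ψ(−x₀−x₁,x₁)` satisfies the noncommutative krv2
equation `μ(h_ψ) = f(x₀+x₁) − f(x₀) − f(x₁)` with
`f(x) = x·(d^R₁ψ(−x₀−x₁,x₁))(x,0)`. -/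
theorem potential_satisfies_noncommutative_krv2 (ψ : A k)
    (h1 : mu k (psiInf1 k ψ) =
        (subst k (x0 k + x1 k) 0) (qOf k ψ) - qOf k ψ -
          (subst k (x1 k) 0) (qOf k ψ))
    (h2 : mu k (psiInf0 k ψ) =
        (subst k (x0 k + x1 k) 0) (qOf k ψ) - dR k 0 (psiInf0 k ψ) -
          (subst k (x0 k) 0) (qOf k ψ)) :
    mu k (x0 k * psiInf0 k ψ + x1 k * psiInf1 k ψ) =
      (x0 k + x1 k) * (subst k (x0 k + x1 k) 0) (qOf k ψ) -
        x0 k * (subst k (x0 k) 0) (qOf k ψ) -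
        x1 k * (subst k (x1 k) 0) (qOf k ψ) := by
  have hμ0 : mu k (x0 k * psiInf0 k ψ) =
      x0 k * dR k 0 (psiInf0 k ψ) + x0 k * mu k (psiInf0 k ψ) :=
    mu_gen_mul 0 _
  have hμ1 : mu k (x1 k * psiInf1 k ψ) = x1 k * qOf k ψ + x1 k * mu k (psiInf1 k ψ) :=
    mu_gen_mul 1 _
  rw [mu_add, hμ0, hμ1, h1, h2]
  noncomm_ring
end
end
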